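/- (Proposition 10) Let Σ be a finite connected 2-dimensional simplicial complex with β_2(Σ) ≥ 1 such that the space Z_2(Σ) of Z_2 2-cycles admits a 2-complete basis (by Theorem 2 of the paper, this holds whenever Σ is PL embeddable into ℝ^{3}). Then f_2(Σ) ≤ 2·( f_1(Σ) − β_1(Σ) − n ), where n is the number of vertices of Σ. -/

import Mathlib

open Finset

/-- A finite simplicial complex on a finite vertex type `V`:
a finite nonempty collection of nonempty finite sets (faces)
closed under taking nonempty subsets. -/
structure SComplex (V : Type) [DecidableEq V] [Fintype V] where
  faces : Finset (Finset V)
  nonempty : faces.Nonempty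
  no_empty : ∀ σ ∈ faces, σ ≠ ∅
  down_closed : ∀ σ ∈ faces, ∀ τ, τ ⊆ σ → τ ≠ ∅ → τ ∈ faces

namespace SComplex

variable {V : Type} [DecidableEq V] [Fintype V]

/-- The set of faces of dimension `i` (i.e. of cardinality `i+1`). -/
def facesDim (K : SComplex V) (i : ℕ) : Finset (Finset V) :=
  K.faces.filter (fun σ => σ.card = i + 1)

/-- `fnum K i` is the face number `f_i`. -/
def fnum (K : SComplex V) (i : ℕ) : ℕ := (K.facesDim i).card

/-- The space of `Z_2` `i`-chains: functions from the `i`-faces to `Z_2`. -/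
abbrev Chains (K : SComplex V) (i : ℕ) : Type := {σ // σ ∈ K.facesDim i} → ZMod 2

/-- The boundary map `∂_i : C_i → C_{i-1}` (and `∂_0 = 0`): the value of `∂ c` on an
`(i-1)`-face `τ` is the sum over `i`-faces `σ ⊇ τ` of `c σ`. -/
def boundary (K : SComplex V) (i : ℕ) : Chains K i →ₗ[ZMod 2] Chains K (i - 1) :=
  if i = 0 then 0 else
  { toFun := fun c τ =>
      ∑ σ : {σ // σ ∈ K.facesDim i}, if (τ : Finset V) ⊆ (σ : Finset V) then c σ else 0
    map_add' := by
      intro c d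
      funext τ
      show (∑ σ : {σ // σ ∈ K.facesDim i}, _) = _
      rw [Pi.add_apply, ← Finset.sum_add_distrib]
      apply Finset.sum_congr rfl
      intro σ _
      by_cases h : (τ : Finset V) ⊆ (σ : Finset V) <;> simp [h]
    map_smul' := by
      intro a c
      funext τ
      show (∑ σ : {σ // σ ∈ K.facesDim i}, _) = _
      rw [RingHom.id_apply, Pi.smul_apply, smul_eq_mul, Finset.mul_sum]
      apply Finset.sum_congr rfl
      intro σ _
      by_cases h : (τ : Finset V) ⊆ (σ : Finset V) <;> simp [h] }

/-- The `i`-th `Z_2` Betti number: `dim ker ∂_i − rank ∂_{i+1}`. -/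
noncomputable def betti (K : SComplex V) (i : ℕ) : ℕ :=
  Module.finrank (ZMod 2) (LinearMap.ker (K.boundary i)) -
    Module.finrank (ZMod 2) (LinearMap.range (K.boundary (i + 1)))

/-- The number of `i`-faces in the support of a chain. -/
def suppCard {K : SComplex V} {i : ℕ} (c : Chains K i) : ℕ :=
  (Finset.univ.filter (fun σ => c σ ≠ 0)).card

/-- The girth: the minimal support size of a nonzero `d`-cycle. -/
noncomputable def girth (K : SComplex V) (d : ℕ) : ℕ :=
  sInf {n | ∃ c : Chains K d, c ∈ LinearMap.ker (K.boundary d) ∧ c ≠ 0 ∧ suppCard c = n}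

/-- `Z_d(K)` admits an `m`-complete basis: a basis of the space of `d`-cycles such that every
`d`-face lies in the support of at most `m` basis elements. -/
def HasCompleteBasis (K : SComplex V) (d m : ℕ) : Prop :=
  ∃ (ι : Type) (_ : Fintype ι) (b : Module.Basis ι (ZMod 2) (LinearMap.ker (K.boundary d))),
    ∀ σ : {σ // σ ∈ K.facesDim d},
      (Finset.univ.filter (fun i : ι => (b i).1 σ ≠ 0)).card ≤ m

/-- `K` is `d`-dimensional: `d` is the maximal dimension of a face. -/
def IsDim (K : SComplex V) (d : ℕ) : Prop :=
  (∀ σ ∈ K.faces, σ.card ≤ d + 1) ∧ ∃ σ ∈ K.faces, σ.card = d + 1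

/-- `K` is pure `d`-dimensional: every face is contained in a `d`-face. -/
def IsPure (K : SComplex V) (d : ℕ) : Prop :=
  ∀ σ ∈ K.faces, ∃ τ ∈ K.faces, σ ⊆ τ ∧ τ.card = d + 1

/-- A `d`-dimensional complex is balanced if its vertices can be colored with `d+1` colors
so that the coloring is injective on every face. -/
def IsBalanced (K : SComplex V) (d : ℕ) : Prop :=
  ∃ coloring : V → Fin (d + 1), ∀ σ ∈ K.faces, Set.InjOn coloring (σ : Set V)

/-- The `d`-skeleton of `K`: all faces of dimension at most `d`. -/
def skeleton (K : SComplex V) (d : ℕ) : SComplex V where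
  faces := K.faces.filter (fun σ => σ.card ≤ d + 1)
  nonempty := by
    obtain ⟨σ, hσ⟩ := K.nonempty
    obtain ⟨v, hv⟩ := Finset.nonempty_iff_ne_empty.mpr (K.no_empty σ hσ)
    refine ⟨{v}, Finset.mem_filter.mpr ⟨K.down_closed σ hσ {v}
      (Finset.singleton_subset_iff.mpr hv) (Finset.singleton_ne_empty v), by simp⟩⟩
  no_empty := by
    intro σ hσ
    exact K.no_empty σ (Finset.mem_filter.mp hσ).1
  down_closed := by
    intro σ hσ τ hτσ hτ
    rw [Finset.mem_filter] at hσ ⊢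
    exact ⟨K.down_closed σ hσ.1 τ hτσ hτ, le_trans (Finset.card_le_card hτσ) hσ.2⟩

end SComplex

open SComplex

/-!
Write `kᵢ = dim ker ∂ᵢ` and `rᵢ = rank ∂ᵢ`. Rank–nullity for `∂₁, ∂₂`, `∂₁ ∂₂ = 0` and
`β₀ = 1` (so `n = r₁ + 1`) turn the claim into `f₂ ≥ 2 k₂ + 2`, where `k₂ = β₂`.

A nonzero 2-cycle `c` has at least four triangles in its support: every edge of a triangle
of the support lies in a second triangle of the support, and distinct edges give distinct
triangles. Now add up the support sizes of the `β₂` elements of a 2-complete basis and of their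
sum, which is a nonzero cycle as well. A triangle lying in the supports of two basis elements
cancels in the sum, so every triangle is counted at most twice: `4 (β₂ + 1) ≤ 2 f₂`.
-/

lemma Finset.eq_of_two_common_subsets {α : Type*} [DecidableEq α] {n : ℕ}
    {τ₁ τ₂ σ σ' : Finset α} (hne : τ₁ ≠ τ₂) (h₁ : #τ₁ = n) (h₂ : #τ₂ = n)
    (hσ : #σ = n + 1) (hσ' : #σ' = n + 1) (h₁σ : τ₁ ⊆ σ) (h₂σ : τ₂ ⊆ σ)
    (h₁σ' : τ₁ ⊆ σ') (h₂σ' : τ₂ ⊆ σ') : σ = σ' := by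
  have hnsub : ¬τ₂ ⊆ τ₁ := fun h => hne (eq_of_subset_of_card_le h (by omega)).symm
  have hlt : #τ₁ < #(τ₁ ∪ τ₂) :=
    card_lt_card ⟨subset_union_left, fun h => hnsub (subset_union_right.trans h)⟩
  have key : ∀ ρ : Finset α, #ρ = n + 1 → τ₁ ⊆ ρ → τ₂ ⊆ ρ → τ₁ ∪ τ₂ = ρ :=
    fun ρ hρ h₁ρ h₂ρ => eq_of_subset_of_card_le (union_subset h₁ρ h₂ρ) (by omega)
  rw [← key σ hσ h₁σ h₂σ, key σ' hσ' h₁σ' h₂σ']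

lemma ZMod.sum_two_eq_card_ne_zero {ι : Type*} (s : Finset ι) (x : ι → ZMod 2) :
    ∑ i ∈ s, x i = #{i ∈ s | x i ≠ 0} := by
  rw [natCast_card_filter]
  refine sum_congr rfl fun i _ => ?_
  generalize x i = a
  fin_cases a <;> rfl

lemma card_ne_zero_add_ite_sum_le_two {ι : Type*} [Fintype ι] (x : ι → ZMod 2)
    (hx : #{i | x i ≠ 0} ≤ 2) : #{i | x i ≠ 0} + (if ∑ i, x i ≠ 0 then 1 else 0) ≤ 2 := by
  rw [ZMod.sum_two_eq_card_ne_zero]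
  interval_cases #{i | x i ≠ 0} <;> decide

theorem sum_card_support_add_card_support_sum_le {S ι : Type*} [Fintype S] [Fintype ι]
    (v : ι → S → ZMod 2) (hv : ∀ σ, #{i | v i σ ≠ 0} ≤ 2) :
    ∑ i, #{σ | v i σ ≠ 0} + #{σ | ∑ i, v i σ ≠ 0} ≤ 2 * Fintype.card S := by
  calc ∑ i, #{σ | v i σ ≠ 0} + #{σ | ∑ i, v i σ ≠ 0}
      = ∑ σ, (#{i | v i σ ≠ 0} + if ∑ i, v i σ ≠ 0 then 1 else 0) := by
        simp only [card_filter, sum_add_distrib]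
        rw [sum_comm]
    _ ≤ ∑ _σ : S, 2 := sum_le_sum fun σ _ => card_ne_zero_add_ite_sum_le_two _ (hv σ)
    _ = 2 * Fintype.card S := by rw [sum_const, card_univ, smul_eq_mul, mul_comm]

namespace SComplex

variable {V : Type} [DecidableEq V] [Fintype V] (K : SComplex V)

@[simp]
lemma mem_facesDim {i : ℕ} {σ : Finset V} : σ ∈ K.facesDim i ↔ σ ∈ K.faces ∧ #σ = i + 1 :=
  mem_filter

lemma boundary_zero : K.boundary 0 = 0 := if_pos rfl

lemma boundary_succ_apply {i : ℕ} (c : K.Chains (i + 1)) (τ : K.facesDim i) :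
    K.boundary (i + 1) c τ = ∑ σ : K.facesDim (i + 1), if τ.1 ⊆ σ.1 then c σ else 0 := by
  rw [boundary, if_neg i.succ_ne_zero]
  rfl

lemma finrank_chains (i : ℕ) : Module.finrank (ZMod 2) (K.Chains i) = K.fnum i := by
  rw [Module.finrank_pi, Fintype.card_coe]
  rfl

lemma finrank_range_add_finrank_ker_boundary (i : ℕ) :
    Module.finrank (ZMod 2) (LinearMap.range (K.boundary i)) +
      Module.finrank (ZMod 2) (LinearMap.ker (K.boundary i)) = K.fnum i := by
  rw [LinearMap.finrank_range_add_finrank_ker, finrank_chains]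

lemma betti_zero :
    K.betti 0 = K.fnum 0 - Module.finrank (ZMod 2) (LinearMap.range (K.boundary 1)) := by
  rw [betti, boundary_zero, LinearMap.ker_zero, finrank_top, finrank_chains]

lemma betti_of_isDim {d : ℕ} (hdim : K.IsDim d) :
    K.betti d = Module.finrank (ZMod 2) (LinearMap.ker (K.boundary d)) := by
  have : IsEmpty (K.facesDim (d + 1)) := ⟨fun σ => by
    have hσ := K.mem_facesDim.mp σ.2
    have := hdim.1 _ hσ.1
    omega⟩
  rw [betti, LinearMap.range_eq_bot.mpr (Subsingleton.elim _ 0), finrank_bot, Nat.sub_zero]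

lemma filter_facesDim_between {j : ℕ} {τ σ : Finset V} (hσ : σ ∈ K.facesDim (j + 2))
    (hτσ : τ ⊆ σ) (hτ : #τ = j + 1) :
    {ρ ∈ K.facesDim (j + 1) | τ ⊆ ρ ∧ ρ ⊆ σ} = (σ \ τ).image (insert · τ) := by
  rw [mem_facesDim] at hσ
  ext ρ
  simp only [mem_filter, mem_facesDim, mem_image, mem_sdiff]
  constructor
  · rintro ⟨⟨-, hρ⟩, hτρ, hρσ⟩
    obtain ⟨y, hyτ, rfl⟩ := exists_eq_insert_iff.mpr ⟨hτρ, by omega⟩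
    exact ⟨y, ⟨hρσ (mem_insert_self y τ), hyτ⟩, rfl⟩
  · rintro ⟨y, ⟨hyσ, hyτ⟩, rfl⟩
    have hsub : insert y τ ⊆ σ := insert_subset hyσ hτσ
    refine ⟨⟨K.down_closed σ hσ.1 _ hsub (insert_ne_empty y τ), ?_⟩, subset_insert y τ, hsub⟩
    rw [card_insert_of_notMem hyτ, hτ]

lemma even_card_filter_facesDim_between {j : ℕ} {τ σ : Finset V}
    (hσ : σ ∈ K.facesDim (j + 2)) (hτ : #τ = j + 1) :
    Even #{ρ ∈ K.facesDim (j + 1) | τ ⊆ ρ ∧ ρ ⊆ σ} := by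
  by_cases hτσ : τ ⊆ σ
  · rw [K.filter_facesDim_between hσ hτσ hτ, card_image_of_injOn, card_sdiff_of_subset hτσ,
      (K.mem_facesDim.mp hσ).2, hτ]
    · exact ⟨1, by omega⟩
    · intro y hy y' _ h
      exact (insert_inj (mem_sdiff.mp hy).2).mp h
  · rw [filter_eq_empty_iff.mpr fun ρ _ h => hτσ (h.1.trans h.2), card_empty]
    exact ⟨0, rfl⟩

theorem boundary_comp_boundary (i : ℕ) : (K.boundary i).comp (K.boundary (i + 1)) = 0 := by
  cases i with
  | zero => rw [boundary_zero, LinearMap.zero_comp]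
  | succ j =>
    refine LinearMap.ext fun c => funext fun τ => ?_
    have hτ : #τ.1 = j + 1 := (K.mem_facesDim.mp τ.2).2
    calc K.boundary (j + 1) (K.boundary (j + 1 + 1) c) τ
        = ∑ ρ : K.facesDim (j + 1), ∑ σ : K.facesDim (j + 2),
            if τ.1 ⊆ ρ.1 ∧ ρ.1 ⊆ σ.1 then c σ else 0 := by
          simp only [boundary_succ_apply, ite_and, sum_ite_irrel, sum_const_zero]
      _ = ∑ σ : K.facesDim (j + 2), #{ρ ∈ K.facesDim (j + 1) | τ.1 ⊆ ρ ∧ ρ ⊆ σ.1} • c σ := by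
          rw [sum_comm]
          refine sum_congr rfl fun σ _ => ?_
          rw [sum_coe_sort (K.facesDim (j + 1)) (fun ρ => if τ.1 ⊆ ρ ∧ ρ ⊆ σ.1 then c σ else 0),
            ← sum_filter, sum_const]
      _ = 0 := by
          refine sum_eq_zero fun σ _ => ?_
          obtain ⟨m, hm⟩ := K.even_card_filter_facesDim_between σ.2 hτ
          rw [hm, add_nsmul, CharTwo.add_self_eq_zero]

lemma exists_ne_mem_support_of_subset {d : ℕ} {c : K.Chains (d + 1)}
    (hc : K.boundary (d + 1) c = 0) {σ₀ : K.facesDim (d + 1)} (h₀ : c σ₀ ≠ 0)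
    {τ : Finset V} (hτ : τ ∈ K.facesDim d) (hτσ : τ ⊆ σ₀.1) :
    ∃ σ : K.facesDim (d + 1), σ ≠ σ₀ ∧ τ ⊆ σ.1 ∧ c σ ≠ 0 := by
  by_contra! h
  have hsum := congrFun hc ⟨τ, hτ⟩
  rw [boundary_succ_apply, sum_eq_single σ₀ (fun σ _ hσ => ite_eq_right_iff.mpr (h σ hσ))
    (fun h => absurd (mem_univ σ₀) h), if_pos hτσ] at hsum
  exact h₀ hsum

theorem add_three_le_suppCard {d : ℕ} {c : K.Chains (d + 1)}
    (hc : K.boundary (d + 1) c = 0) (hne : c ≠ 0) : d + 3 ≤ suppCard c := by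
  obtain ⟨σ₀, h₀⟩ : ∃ σ, c σ ≠ 0 := Function.ne_iff.mp hne
  set S : Finset (K.facesDim (d + 1)) := {σ | c σ ≠ 0}
  have h₀S : σ₀ ∈ S := mem_filter.mpr ⟨mem_univ _, h₀⟩
  have hσ₀ := K.mem_facesDim.mp σ₀.2
  have hfacet : ∀ τ ∈ σ₀.1.powersetCard (d + 1), τ ∈ K.facesDim d := fun τ hτ => by
    obtain ⟨hτσ, hτ⟩ := mem_powersetCard.mp hτ
    exact K.mem_facesDim.mpr
      ⟨K.down_closed _ hσ₀.1 τ hτσ (nonempty_iff_ne_empty.mp (card_pos.mp (by omega))), hτ⟩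
  have : Nonempty (K.facesDim (d + 1)) := ⟨σ₀⟩
  choose! g hg₀ hgτ hgc using fun τ hτ =>
    K.exists_ne_mem_support_of_subset hc h₀ (hfacet τ hτ) (mem_powersetCard.mp hτ).1
  have hmaps : ∀ τ ∈ σ₀.1.powersetCard (d + 1), g τ ∈ S.erase σ₀ :=
    fun τ hτ => mem_erase.mpr ⟨hg₀ τ hτ, mem_filter.mpr ⟨mem_univ _, hgc τ hτ⟩⟩
  have hinj : Set.InjOn g (σ₀.1.powersetCard (d + 1)) := by
    intro τ₁ hm₁ τ₂ hm₂ hg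
    by_contra hne
    obtain ⟨h₁σ, h₁⟩ := mem_powersetCard.mp hm₁
    obtain ⟨h₂σ, h₂⟩ := mem_powersetCard.mp hm₂
    refine hg₀ τ₁ hm₁ (Subtype.ext (eq_of_two_common_subsets hne h₁ h₂
      (K.mem_facesDim.mp (g τ₁).2).2 hσ₀.2 (hgτ τ₁ hm₁) ?_ h₁σ h₂σ))
    exact hg ▸ hgτ τ₂ hm₂
  have hcard := card_le_card_of_injOn g hmaps hinj
  rw [card_powersetCard, hσ₀.2, Nat.choose_succ_self_right, card_erase_of_mem h₀S] at hcard
  change d + 3 ≤ #S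
  omega

theorem add_three_mul_le_of_hasCompleteBasis {d : ℕ} (hcb : K.HasCompleteBasis (d + 1) 2)
    (hpos : 0 < Module.finrank (ZMod 2) (LinearMap.ker (K.boundary (d + 1)))) :
    (d + 3) * (Module.finrank (ZMod 2) (LinearMap.ker (K.boundary (d + 1))) + 1) ≤
      2 * K.fnum (d + 1) := by
  obtain ⟨ι, _, b, hb⟩ := hcb
  rw [Module.finrank_eq_card_basis b] at hpos ⊢
  have : Nonempty ι := Fintype.card_pos_iff.mp hpos
  have hsum : ∑ i, b i ≠ 0 := fun h => one_ne_zero <|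
    Fintype.linearIndependent_iff.mp b.linearIndependent (fun _ => 1) (by simpa using h)
      (Classical.arbitrary ι)
  have hsupp : ∀ w : LinearMap.ker (K.boundary (d + 1)), w ≠ 0 → d + 3 ≤ suppCard w.1 :=
    fun w hw => K.add_three_le_suppCard w.2 (Submodule.coe_eq_zero.not.mpr hw)
  calc (d + 3) * (Fintype.card ι + 1)
      = ∑ _i : ι, (d + 3) + (d + 3) := by rw [sum_const, card_univ, smul_eq_mul]; ring
    _ ≤ ∑ i, suppCard (b i).1 + suppCard (∑ i, b i).1 :=
        add_le_add (sum_le_sum fun i _ => hsupp _ (b.ne_zero i)) (hsupp _ hsum)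
    _ ≤ 2 * Fintype.card (K.facesDim (d + 1)) := by
        simpa only [suppCard, Submodule.coe_sum, Finset.sum_apply] using
          sum_card_support_add_card_support_sum_le (fun i => (b i).1) hb
    _ = 2 * K.fnum (d + 1) := by rw [Fintype.card_coe]; rfl

end SComplex

/-- Proposition 10. -/
theorem prop10 {V : Type} [DecidableEq V] [Fintype V]
    (K : SComplex V) (hdim : K.IsDim 2) (hconn : K.betti 0 = 1)
    (hβ : 1 ≤ K.betti 2) (hcb : K.HasCompleteBasis 2 2) :
    (K.fnum 2 : ℤ) ≤ 2 * ((K.fnum 1 : ℤ) - (K.betti 1 : ℤ) - (K.fnum 0 : ℤ)) := by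
  have hβ₂ := K.betti_of_isDim hdim
  have hcycles : 4 * (Module.finrank (ZMod 2) (LinearMap.ker (K.boundary 2)) + 1) ≤
      2 * K.fnum 2 :=
    K.add_three_mul_le_of_hasCompleteBasis (d := 1) hcb (hβ₂ ▸ hβ)
  have hβ₀ := K.betti_zero
  have hr₁ : Module.finrank (ZMod 2) (LinearMap.range (K.boundary 1)) ≤ K.fnum 0 :=
    K.finrank_chains 0 ▸ Submodule.finrank_le _
  have hr₂ : Module.finrank (ZMod 2) (LinearMap.range (K.boundary 2)) ≤
      Module.finrank (ZMod 2) (LinearMap.ker (K.boundary 1)) :=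
    Submodule.finrank_mono (LinearMap.range_le_ker_iff.mpr (K.boundary_comp_boundary 1))
  have hβ₁ : K.betti 1 + Module.finrank (ZMod 2) (LinearMap.range (K.boundary 2)) =
      Module.finrank (ZMod 2) (LinearMap.ker (K.boundary 1)) := Nat.sub_add_cancel hr₂
  have h₁ := K.finrank_range_add_finrank_ker_boundary 1
  have h₂ := K.finrank_range_add_finrank_ker_boundary 2
  omega
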